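/- For every δ > 0 and every λ ∈ ℂ with Re(λ) > 0, the Laplace transform of the function V_δ(t) = exp(-δ²/(4t))/√(π t) equals e^{-√λ · δ}/√λ, where √λ denotes the principal branch of the square root. -/

import Mathlib

/-!
For real `λ = s > 0` the substitution `t = u²` and completing the square,
`s u² + δ²/(4u²) = (√s u - δ/(2u))² + δ√s`, reduce the Laplace integral to
`∫₀^∞ exp(-(α u - β/u)²) du` with `α = √s`, `β = δ/2`. By the Cauchy–Schlömilch
transformation this equals `(2α)⁻¹ ∫_ℝ exp(-x²) = √π/(2α)`: the substitution `x = αu - β/u`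
maps `(0, ∞)` onto `ℝ` with Jacobian `α + β/u²`, and the involution `u ↦ β/(αu)` shows that the
`β/u²` part contributes as much as the `α` part. Both sides are holomorphic in the right
half-plane (the left one by differentiating under the integral sign), so they agree there by
the identity theorem.
-/

open MeasureTheory Real Complex
open Set Filter Topology

section CauchySchlomilch

variable {E : Type*} [NormedAddCommGroup E] [NormedSpace ℝ E] {α β : ℝ}

lemma strictMonoOn_mul_sub_div (hα : 0 < α) (hβ : 0 ≤ β) :
    StrictMonoOn (fun u : ℝ => α * u - β / u) (Ioi 0) := by
  intro a ha b _ hab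
  have : β / b ≤ β / a := div_le_div_of_nonneg_left hβ ha hab.le
  dsimp only
  nlinarith

lemma image_mul_sub_div_Ioi (hα : 0 < α) (hβ : 0 < β) :
    (fun u : ℝ => α * u - β / u) '' Ioi 0 = univ := by
  refine eq_univ_of_forall fun v => ?_
  -- `v` is attained at the positive root of `α u² - v u - β`
  set r := √(v ^ 2 + 4 * α * β)
  have hr : r ^ 2 = v ^ 2 + 4 * α * β := Real.sq_sqrt (by positivity)
  have hvr : |v| < r := (Real.lt_sqrt (abs_nonneg v)).2 (by rw [sq_abs]; nlinarith)
  obtain ⟨u, hu_def⟩ : ∃ u, u = (v + r) / (2 * α) := ⟨_, rfl⟩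
  have hu : 0 < u := hu_def ▸ div_pos (by linarith [neg_abs_le v]) (by positivity)
  have hroot : α * u ^ 2 = v * u + β := by
    rw [hu_def]
    field_simp
    nlinarith
  refine ⟨u, hu, ?_⟩
  field_simp
  linear_combination hroot

lemma hasDerivAt_mul_sub_div (α β : ℝ) {u : ℝ} (hu : u ≠ 0) :
    HasDerivAt (fun u : ℝ => α * u - β / u) (α + β / u ^ 2) u :=
  (((hasDerivAt_id' u).const_mul α).sub
    ((hasDerivAt_const u β).div (hasDerivAt_id' u) hu)).congr_deriv (by ring)

lemma integral_Ioi_deriv_smul_comp_mul_sub_div (hα : 0 < α) (hβ : 0 < β) (f : ℝ → E) :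
    ∫ u in Ioi 0, (α + β / u ^ 2) • f (α * u - β / u) = ∫ x, f x := by
  have h := integral_image_eq_integral_abs_deriv_smul measurableSet_Ioi
    (fun u hu => (hasDerivAt_mul_sub_div α β (ne_of_gt hu)).hasDerivWithinAt)
    (strictMonoOn_mul_sub_div hα hβ.le).injOn f
  rw [image_mul_sub_div_Ioi hα hβ, Measure.restrict_univ] at h
  rw [h]
  refine setIntegral_congr_fun measurableSet_Ioi fun u _ => ?_
  rw [abs_of_pos (by positivity)]

lemma integrableOn_Ioi_deriv_smul_comp_mul_sub_div_iff (hα : 0 < α) (hβ : 0 < β)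
    (f : ℝ → E) :
    IntegrableOn (fun u => (α + β / u ^ 2) • f (α * u - β / u)) (Ioi 0) ↔ Integrable f := by
  have h := integrableOn_image_iff_integrableOn_abs_deriv_smul measurableSet_Ioi
    (fun u hu => (hasDerivAt_mul_sub_div α β (ne_of_gt hu)).hasDerivWithinAt)
    (strictMonoOn_mul_sub_div hα hβ.le).injOn f
  rw [image_mul_sub_div_Ioi hα hβ, integrableOn_univ] at h
  rw [h]
  refine integrableOn_congr_fun (fun u _ => ?_) measurableSet_Ioi
  rw [abs_of_pos (by positivity)]

lemma integrableOn_Ioi_comp_mul_sub_div {f : ℝ → E} (hf : Integrable f) (hα : 0 < α)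
    (hβ : 0 < β) : IntegrableOn (fun u => f (α * u - β / u)) (Ioi 0) := by
  have h := (integrableOn_Ioi_deriv_smul_comp_mul_sub_div_iff hα hβ f).2 hf
  have hc : ContinuousOn (fun u : ℝ => (α + β / u ^ 2)⁻¹) (Ioi 0) :=
    ContinuousOn.inv₀ (by fun_prop (disch := intro u (hu : 0 < u); positivity))
      fun u (hu : 0 < u) => by positivity
  refine IntegrableOn.congr_fun (h.bdd_smul α⁻¹ (hc.aestronglyMeasurable measurableSet_Ioi) ?_)
    (fun u (hu : 0 < u) => ?_) measurableSet_Ioi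
  · filter_upwards [ae_restrict_mem measurableSet_Ioi] with u (hu : 0 < u)
    rw [norm_inv, Real.norm_of_nonneg (by positivity)]
    exact inv_anti₀ hα (by linarith [show 0 ≤ β / u ^ 2 by positivity])
  · simp only [Pi.smul_apply', smul_smul]
    rw [inv_mul_cancel₀ (by positivity), one_smul]

lemma integral_Ioi_div_sq_smul_comp_div {c : ℝ} (hc : 0 < c) (g : ℝ → E) :
    ∫ u in Ioi 0, (c / u ^ 2) • g (c / u) = ∫ u in Ioi 0, g u := by
  have hderiv : ∀ u ∈ Ioi (0 : ℝ), HasDerivWithinAt (c / ·) (-(c / u ^ 2)) (Ioi 0) u :=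
    fun u hu => by
      simpa [div_eq_mul_inv] using ((hasDerivAt_inv (ne_of_gt hu)).const_mul c).hasDerivWithinAt
  have hinj : InjOn (c / ·) (Ioi 0) := fun a _ b _ hab => by
    simpa [div_div_cancel₀ (ne_of_gt hc)] using congrArg (c / ·) hab
  have himage : (c / ·) '' Ioi 0 = Ioi 0 :=
    Subset.antisymm (image_subset_iff.2 fun u hu => div_pos hc hu) fun v hv =>
      ⟨c / v, div_pos hc hv, div_div_cancel₀ (ne_of_gt hc)⟩
  have h := integral_image_eq_integral_abs_deriv_smul measurableSet_Ioi hderiv hinj g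
  rw [himage] at h
  rw [h]
  refine setIntegral_congr_fun measurableSet_Ioi fun u (hu : 0 < u) => ?_
  rw [abs_neg, abs_of_pos (by positivity)]

theorem integral_Ioi_comp_mul_sub_div {f : ℝ → E} (hf : Integrable f)
    (hf_even : ∀ x, f (-x) = f x) (hα : 0 < α) (hβ : 0 < β) :
    ∫ u in Ioi 0, f (α * u - β / u) = (2 * α)⁻¹ • ∫ x, f x := by
  set I := ∫ u in Ioi 0, f (α * u - β / u)
  have hflip : ∫ u in Ioi 0, (β / u ^ 2) • f (α * u - β / u) = α • I := by
    rw [← integral_Ioi_div_sq_smul_comp_div (div_pos hβ hα), ← integral_smul]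
    refine setIntegral_congr_fun measurableSet_Ioi fun u (hu : 0 < u) => ?_
    have : α * (β / α / u) - β / (β / α / u) = -(α * u - β / u) := by field_simp; ring
    simp only [this, hf_even, smul_smul]
    congr 1
    field_simp
  have hsplit : ∫ u in Ioi 0, (β / u ^ 2) • f (α * u - β / u) = (∫ x, f x) - α • I := by
    have hint : IntegrableOn (fun u => α • f (α * u - β / u)) (Ioi 0) :=
      (integrableOn_Ioi_comp_mul_sub_div hf hα hβ).smul α
    rw [← integral_Ioi_deriv_smul_comp_mul_sub_div hα hβ f, ← integral_smul,
      ← integral_sub ((integrableOn_Ioi_deriv_smul_comp_mul_sub_div_iff hα hβ f).2 hf) hint]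
    congr with u
    rw [add_smul, add_sub_cancel_left]
  rw [eq_inv_smul_iff₀ (by positivity), two_mul, add_smul, ← eq_sub_iff_add_eq, ← hsplit, hflip]

lemma integral_Ioi_exp_neg_sq_mul_sub_div (hα : 0 < α) (hβ : 0 < β) :
    ∫ u in Ioi 0, rexp (-(α * u - β / u) ^ 2) = √π / (2 * α) := by
  have h := integral_Ioi_comp_mul_sub_div (f := fun x => rexp (-x ^ 2))
    (by simpa using integrable_exp_neg_mul_sq one_pos) (by simp) hα hβ
  have hgauss : ∫ x, rexp (-x ^ 2) = √π := by simpa using integral_gaussian 1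
  rw [h, smul_eq_mul, hgauss]
  ring

lemma integrableOn_Ioi_exp_neg_sq_mul_sub_div (hα : 0 < α) (hβ : 0 < β) :
    IntegrableOn (fun u => rexp (-(α * u - β / u) ^ 2)) (Ioi 0) :=
  integrableOn_Ioi_comp_mul_sub_div (f := fun x => rexp (-x ^ 2))
    (by simpa using integrable_exp_neg_mul_sq one_pos) hα hβ

end CauchySchlomilch

section LaplaceTransform

lemma norm_cexp_neg_mul_ofReal (z : ℂ) (t : ℝ) : ‖cexp (-z * t)‖ = rexp (-z.re * t) := by
  simp [Complex.norm_exp]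

lemma mul_exp_neg_two_mul_le {c : ℝ} (hc : 0 < c) (t : ℝ) :
    t * rexp (-(2 * c) * t) ≤ c⁻¹ * rexp (-c * t) := by
  have hlin : c * t ≤ rexp (c * t) := by linarith [Real.add_one_le_exp (c * t)]
  have hsplit : rexp (-(2 * c) * t) = rexp (-c * t) * rexp (-c * t) := by
    rw [← Real.exp_add]; ring_nf
  rw [le_inv_mul_iff₀ hc, hsplit, ← mul_assoc, ← mul_assoc]
  calc c * t * rexp (-c * t) * rexp (-c * t)
      ≤ rexp (c * t) * rexp (-c * t) * rexp (-c * t) := by gcongr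
    _ = rexp (-c * t) := by
      rw [← Real.exp_add, show c * t + -c * t = 0 by ring, Real.exp_zero, one_mul]

theorem differentiableOn_integral_cexp_neg_mul {f : ℝ → ℂ}
    (hf : ∀ z : ℂ, 0 < z.re → IntegrableOn (fun t : ℝ => cexp (-z * t) * f t) (Ioi 0)) :
    DifferentiableOn ℂ (fun z => ∫ t in Ioi (0 : ℝ), cexp (-z * t) * f t) {z | 0 < z.re} := by
  intro z (hz : 0 < z.re)
  set c := z.re / 4 with hc_def
  have hc : 0 < c := by positivity
  have hre : ∀ w ∈ Metric.ball z (2 * c), 2 * c ≤ w.re := fun w hw => by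
    have := (abs_re_le_norm (w - z)).trans (mem_ball_iff_norm.1 hw).le
    rw [sub_re, abs_le] at this
    linarith [this.1]
  -- on the ball `Re w ≥ 2c`, and `t e^{-2ct} ≤ c⁻¹ e^{-ct}` lets `e^{-ct} f` dominate `∂_w`
  have hderiv := hasDerivAt_integral_of_dominated_loc_of_deriv_le (μ := volume.restrict (Ioi 0))
    (F := fun w (t : ℝ) => cexp (-w * t) * f t)
    (F' := fun w (t : ℝ) => -(t : ℂ) * (cexp (-w * t) * f t))
    (bound := fun t : ℝ => c⁻¹ * ‖cexp (-c * t) * f t‖)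
    (Metric.ball_mem_nhds z (ε := 2 * c) (by positivity))
    ?meas (hf z hz) ?meas' ?bound ((hf c (by simpa using hc)).norm.const_mul _) ?diff
  · exact hderiv.2.differentiableAt.differentiableWithinAt
  · filter_upwards [(isOpen_lt continuous_const Complex.continuous_re).mem_nhds hz] with w hw
    exact (hf w hw).aestronglyMeasurable
  · exact (Complex.continuous_ofReal.neg.aestronglyMeasurable).mul (hf z hz).aestronglyMeasurable
  · filter_upwards [ae_restrict_mem measurableSet_Ioi] with t (ht : 0 < t) w hw
    rw [norm_mul, norm_neg, Complex.norm_real, Real.norm_of_nonneg ht.le, norm_mul, norm_mul,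
      norm_cexp_neg_mul_ofReal, norm_cexp_neg_mul_ofReal, ← mul_assoc, ← mul_assoc]
    gcongr ?_ * _
    calc t * rexp (-w.re * t) ≤ t * rexp (-(2 * c) * t) := by gcongr; linarith [hre w hw]
      _ ≤ c⁻¹ * rexp (-c * t) := mul_exp_neg_two_mul_le hc t
      _ = c⁻¹ * rexp (-(c : ℂ).re * t) := by simp
  · filter_upwards with t w _
    exact ((((hasDerivAt_id w).neg.mul_const (t : ℂ)).cexp).mul_const (f t)).congr_deriv
      (by simp; ring)

lemma eqOn_re_pos_of_eq_ofReal {E : Type*} [NormedAddCommGroup E] [NormedSpace ℂ E]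
    [CompleteSpace E] {f g : ℂ → E} (hf : DifferentiableOn ℂ f {z | 0 < z.re})
    (hg : DifferentiableOn ℂ g {z | 0 < z.re}) (hfg : ∀ x : ℝ, 0 < x → f x = g x) :
    EqOn f g {z | 0 < z.re} := by
  have hU : IsOpen {z : ℂ | 0 < z.re} := isOpen_lt continuous_const Complex.continuous_re
  have hreal : Tendsto ((↑) : ℝ → ℂ) (𝓝[≠] 1) (𝓝[≠] 1) :=
    Complex.continuous_ofReal.continuousWithinAt.tendsto_nhdsWithin fun x hx => by simpa using hx
  refine (hf.analyticOnNhd hU).eqOn_of_preconnected_of_frequently_eq (hg.analyticOnNhd hU)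
    (convex_halfSpace_re_gt 0).isPreconnected (z₀ := 1) (by simp) (hreal.frequently ?_)
  exact ((eventually_gt_nhds one_pos).filter_mono nhdsWithin_le_nhds).frequently.mono hfg

lemma differentiableOn_cexp_neg_cpow_half_mul_div (a : ℂ) :
    DifferentiableOn ℂ (fun z : ℂ => cexp (-z ^ (1 / 2 : ℂ) * a) / z ^ (1 / 2 : ℂ))
      slitPlane := by
  intro z hz
  have hsqrt : DifferentiableAt ℂ (fun z : ℂ => z ^ (1 / 2 : ℂ)) z :=
    differentiableAt_id.cpow_const hz
  exact (((hsqrt.neg.mul_const a).cexp).div hsqrt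
    (by simpa using slitPlane_ne_zero hz)).differentiableWithinAt

lemma ofReal_cpow_half {s : ℝ} (hs : 0 ≤ s) : (s : ℂ) ^ (1 / 2 : ℂ) = (√s : ℝ) := by
  rw [Real.sqrt_eq_rpow, Complex.ofReal_cpow hs]
  norm_num

end LaplaceTransform

-- the paper's `V_δ(t)`: twice the heat kernel `(4πt)^{-1/2} e^{-δ²/(4t)}` of `ℝ`
noncomputable def doubleHeatKernel (δ t : ℝ) : ℝ := rexp (-δ ^ 2 / (4 * t)) / √(π * t)

section doubleHeatKernel

variable {s δ : ℝ}

lemma continuousOn_doubleHeatKernel (δ : ℝ) : ContinuousOn (doubleHeatKernel δ) (Ioi 0) := by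
  unfold doubleHeatKernel
  fun_prop (disch := intro t (ht : 0 < t); positivity)

lemma doubleHeatKernel_nonneg (δ t : ℝ) : 0 ≤ doubleHeatKernel δ t := by
  unfold doubleHeatKernel
  positivity

lemma rpow_two_subst_exp_neg_mul_doubleHeatKernel (hs : 0 < s) {u : ℝ} (hu : 0 < u) :
    (2 * u ^ (2 - 1 : ℝ)) • (rexp (-s * u ^ (2 : ℝ)) * doubleHeatKernel δ (u ^ (2 : ℝ))) =
      2 / √π * rexp (-(δ * √s)) * rexp (-(√s * u - δ / 2 / u) ^ 2) := by
  have hsqrt : √(π * u ^ 2) = √π * u := by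
    rw [Real.sqrt_mul Real.pi_pos.le, Real.sqrt_sq hu.le]
  have hexp : -s * u ^ 2 + -δ ^ 2 / (4 * u ^ 2) = -(δ * √s) + -(√s * u - δ / 2 / u) ^ 2 := by
    field_simp
    linear_combination (16 * u ^ 4) * Real.sq_sqrt hs.le
  rw [Real.rpow_two, smul_eq_mul, doubleHeatKernel, hsqrt, mul_div_assoc', mul_assoc,
    ← Real.exp_add, hexp, Real.exp_add]
  norm_num
  field_simp

lemma integrableOn_exp_neg_mul_mul_doubleHeatKernel (hs : 0 < s) (hδ : 0 < δ) :
    IntegrableOn (fun t => rexp (-s * t) * doubleHeatKernel δ t) (Ioi 0) := by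
  rw [← integrableOn_Ioi_comp_rpow_iff _ two_ne_zero]
  refine IntegrableOn.congr_fun ((integrableOn_Ioi_exp_neg_sq_mul_sub_div (Real.sqrt_pos.2 hs)
    (half_pos hδ)).const_mul (2 / √π * rexp (-(δ * √s)))) (fun u (hu : 0 < u) => ?_)
    measurableSet_Ioi
  rw [abs_two, rpow_two_subst_exp_neg_mul_doubleHeatKernel hs hu]

lemma integral_exp_neg_mul_mul_doubleHeatKernel (hs : 0 < s) (hδ : 0 < δ) :
    ∫ t in Ioi 0, rexp (-s * t) * doubleHeatKernel δ t = rexp (-(δ * √s)) / √s := by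
  have hs' : 0 < √s := Real.sqrt_pos.2 hs
  rw [← integral_comp_rpow_Ioi_of_pos two_pos,
    setIntegral_congr_fun measurableSet_Ioi
      fun u (hu : 0 < u) => rpow_two_subst_exp_neg_mul_doubleHeatKernel hs hu,
    integral_const_mul, integral_Ioi_exp_neg_sq_mul_sub_div hs' (half_pos hδ)]
  field_simp

lemma integrableOn_cexp_neg_mul_mul_doubleHeatKernel (hδ : 0 < δ) {z : ℂ} (hz : 0 < z.re) :
    IntegrableOn (fun t : ℝ => cexp (-z * t) * doubleHeatKernel δ t) (Ioi 0) := by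
  refine Integrable.mono' (integrableOn_exp_neg_mul_mul_doubleHeatKernel hz hδ) ?_
    (ae_of_all _ fun t => ?_)
  · exact (Continuous.aestronglyMeasurable (by fun_prop)).mul
      ((Complex.continuous_ofReal.comp_continuousOn (continuousOn_doubleHeatKernel δ))
        |>.aestronglyMeasurable measurableSet_Ioi)
  · rw [norm_mul, norm_cexp_neg_mul_ofReal, Complex.norm_real,
      Real.norm_of_nonneg (doubleHeatKernel_nonneg δ t)]

lemma integral_cexp_neg_ofReal_mul_mul_doubleHeatKernel (hs : 0 < s) (hδ : 0 < δ) :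
    ∫ t in Ioi (0 : ℝ), cexp (-(s : ℂ) * t) * doubleHeatKernel δ t =
      cexp (-(s : ℂ) ^ (1 / 2 : ℂ) * δ) / (s : ℂ) ^ (1 / 2 : ℂ) := by
  have hreal : ∀ t : ℝ, cexp (-(s : ℂ) * t) * doubleHeatKernel δ t =
      ((rexp (-s * t) * doubleHeatKernel δ t : ℝ) : ℂ) := fun t => by push_cast; rfl
  simp_rw [hreal]
  rw [integral_complex_ofReal, integral_exp_neg_mul_mul_doubleHeatKernel hs hδ,
    ofReal_cpow_half hs.le]
  push_cast
  ring_nf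

end doubleHeatKernel

/-- For every δ > 0 and λ ∈ ℂ with Re λ > 0, the Laplace transform of
`V_δ(t) = exp(-δ²/(4t))/√(π t)` equals `e^{-√λ δ}/√λ` (principal square root). -/
theorem laplace_transform_heat_kernel_dim2 (δ : ℝ) (hδ : 0 < δ) (lam : ℂ)
    (hlam : 0 < lam.re) :
    ∫ t in Set.Ioi (0 : ℝ), Complex.exp (-lam * t) *
        (Real.exp (-δ ^ 2 / (4 * t)) / Real.sqrt (Real.pi * t)) =
      Complex.exp (-(lam ^ (1 / 2 : ℂ)) * δ) / lam ^ (1 / 2 : ℂ) := by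
  have h := eqOn_re_pos_of_eq_ofReal
    (differentiableOn_integral_cexp_neg_mul fun z hz =>
      integrableOn_cexp_neg_mul_mul_doubleHeatKernel hδ hz)
    ((differentiableOn_cexp_neg_cpow_half_mul_div δ).mono fun z hz => Or.inl hz)
    (fun s hs => integral_cexp_neg_ofReal_mul_mul_doubleHeatKernel hs hδ) hlam
  simpa only [doubleHeatKernel, ofReal_div] using h
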